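/- Every comeager subset of Cantor space that is a countable union of countable intersections of open sets, with each intersection of open sets dense in some basic open interval, contains a computable sequence; consequently, the class of 1-generic sequences is not Sigma^0_3. -/

import Mathlib

open Filter Topology

abbrev Cantor := ℕ → Bool

/-- The length-`n` prefix of an infinite binary sequence, as a list. -/
def pref (X : ℕ → Bool) (n : ℕ) : List Bool := (List.range n).map X

/-- A predicate is computably enumerable (c.e., Σ⁰₁). -/
def CEPred {α : Type} [Primcodable α] (P : α → Prop) : Prop :=
  ∃ f : α →. Unit, Partrec f ∧ ∀ a, P a ↔ (f a).Dom

/-- The basic open cylinder of a finite string. -/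
def cyl (σ : List Bool) : Set Cantor := {A | pref A σ.length = σ}

/-- The effectively open (Σ⁰₁) set generated by a set of strings `S`:
those sequences some prefix of which lies in `S`. -/
def effOpen (S : List Bool → Prop) : Set Cantor := {A | ∃ k, S (pref A k)}

/-- `X` is a Σ⁰₃ class: a computably-indexed union of intersections of
uniformly computably enumerable open sets. -/
def IsSigma03Class (X : Set Cantor) : Prop :=
  ∃ S : ℕ → ℕ → List Bool → Prop,
    CEPred (fun p : ℕ × ℕ × List Bool => S p.1 p.2.1 p.2.2) ∧
    X = ⋃ n, ⋂ m, effOpen (S n m)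

/-- `X` is 1-generic with respect to the (monotone, computable approximation of
the) universal oracle halting predicate `h`: for every `e` some prefix of `X`
either makes machine `e` halt on input `e`, or no extension of it does. -/
def OneGeneric (h : ℕ → List Bool → ℕ → Bool) (X : Cantor) : Prop :=
  ∀ e : ℕ, ∃ n : ℕ,
    (∃ s, h e (pref X n) s = true) ∨
    (∀ τ : List Bool, pref X n <+: τ → ∀ s, h e τ s = false)

/-! If `⋂ m, effOpen (S m)` meets every cylinder above `σ`, a finite-extension construction
starting from `σ` builds a computable member: at stage `m`, effectively search for an extension
of the current string having a prefix enumerated into `S m`; the search terminates because of the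
density. For the generics: if `{X | OneGeneric h X} = ⋃ n, ⋂ m, effOpen (S n m)`, then either
some `⋂ m, effOpen (S n m)` is dense above a string and so contains a computable, hence not
1-generic, sequence, or each of them is nowhere dense and the comeager set of 1-generics would be
meagre, contradicting the Baire category theorem. -/

open PiNat (cylinder)

@[simp] lemma length_pref (A : Cantor) (n : ℕ) : (pref A n).length = n := by simp [pref]

lemma pref_prefix_pref (A : Cantor) {m n : ℕ} (hmn : m ≤ n) : pref A m <+: pref A n := by
  rw [List.prefix_iff_eq_take]
  simp [pref, ← List.map_take, List.take_range, Nat.min_eq_left hmn]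

lemma mem_cyl_iff {A : Cantor} {σ : List Bool} :
    A ∈ cyl σ ↔ ∀ i (hi : i < σ.length), A i = σ[i] := by
  simp [cyl, pref, List.ext_getElem_iff, eq_comm]

lemma mem_cyl_pref (A : Cantor) (n : ℕ) : A ∈ cyl (pref A n) := by
  simp [cyl]

lemma cyl_pref (A : Cantor) (n : ℕ) : cyl (pref A n) = cylinder A n := by
  ext B
  simp [mem_cyl_iff, PiNat.mem_cylinder_iff, pref]

lemma cyl_anti {σ τ : List Bool} (h : σ <+: τ) : cyl τ ⊆ cyl σ := fun A hA =>
  mem_cyl_iff.2 fun i hi => by rw [mem_cyl_iff.1 hA i (hi.trans_le h.length_le), h.getElem]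

lemma nonempty_cyl (σ : List Bool) : (cyl σ).Nonempty :=
  ⟨fun i => σ.getD i false, mem_cyl_iff.2 fun i hi => by simp [hi]⟩

lemma isOpen_cyl (σ : List Bool) : IsOpen (cyl σ) := by
  obtain ⟨A, hA⟩ := nonempty_cyl σ
  rw [← show pref A σ.length = σ from hA, cyl_pref]
  exact PiNat.isOpen_cylinder _ A _

lemma exists_cylinder_subset_of_mem_nhds {U : Set Cantor} {A : Cantor} (hU : U ∈ 𝓝 A) :
    ∃ n, cylinder A n ⊆ U := by
  obtain ⟨_, ⟨B, n, rfl⟩, hAB, hBU⟩ :=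
    (PiNat.isTopologicalBasis_cylinders _).mem_nhds_iff.1 hU
  exact ⟨n, (PiNat.mem_cylinder_iff_eq.1 hAB).trans_subset hBU⟩

lemma dense_of_forall_inter_cyl_nonempty {s : Set Cantor} (hs : ∀ σ, (s ∩ cyl σ).Nonempty) :
    Dense s := by
  refine dense_iff_inter_open.2 fun U hU ⟨A, hA⟩ => ?_
  obtain ⟨n, hn⟩ := exists_cylinder_subset_of_mem_nhds (hU.mem_nhds hA)
  obtain ⟨B, hBs, hB⟩ := hs (pref A n)
  exact ⟨B, hn (cyl_pref A n ▸ hB), hBs⟩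

lemma isNowhereDense_of_forall_exists_cyl {s : Set Cantor}
    (hs : ∀ σ, ∃ τ, σ <+: τ ∧ ∀ A ∈ s, A ∉ cyl τ) : IsNowhereDense s := by
  refine isNowhereDense_iff_forall_notMem_nhds.2 fun A _ hA => ?_
  obtain ⟨n, hn⟩ := exists_cylinder_subset_of_mem_nhds hA
  obtain ⟨τ, hτ, hτs⟩ := hs (pref A n)
  have hτ_closure : cyl τ ⊆ closure s := (cyl_anti hτ).trans (cyl_pref A n ▸ hn)
  have hτ_disj : Disjoint (cyl τ) (closure s) :=
    (Set.disjoint_left.2 fun B hB hBs => hτs B hBs hB).closure_right (isOpen_cyl τ)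
  obtain ⟨B, hB⟩ := nonempty_cyl τ
  exact Set.disjoint_left.1 hτ_disj hB (hτ_closure hB)

lemma mem_effOpen_of_mem_cyl {S : List Bool → Prop} {σ : List Bool} (hσ : S σ) {A : Cantor}
    (hA : A ∈ cyl σ) : A ∈ effOpen S :=
  ⟨σ.length, by rwa [show pref A σ.length = σ from hA]⟩

lemma isOpen_effOpen (S : List Bool → Prop) : IsOpen (effOpen S) :=
  isOpen_iff_forall_mem_open.2 fun A ⟨n, hn⟩ =>
    ⟨cyl (pref A n), fun _ => mem_effOpen_of_mem_cyl hn, isOpen_cyl _, mem_cyl_pref A n⟩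

lemma dense_effOpen {S : List Bool → Prop} (hS : ∀ σ, ∃ τ, σ <+: τ ∧ S τ) :
    Dense (effOpen S) :=
  dense_of_forall_inter_cyl_nonempty fun σ => by
    obtain ⟨τ, hστ, hτ⟩ := hS σ
    obtain ⟨A, hA⟩ := nonempty_cyl τ
    exact ⟨A, mem_effOpen_of_mem_cyl hτ hA, cyl_anti hστ hA⟩

def Decides (h : ℕ → List Bool → ℕ → Bool) (e : ℕ) (σ : List Bool) : Prop :=
  (∃ s, h e σ s = true) ∨ ∀ τ, σ <+: τ → ∀ s, h e τ s = false

lemma exists_extension_decides (h : ℕ → List Bool → ℕ → Bool) (e : ℕ) (σ : List Bool) :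
    ∃ τ, σ <+: τ ∧ Decides h e τ := by
  by_cases hσ : ∃ τ, σ <+: τ ∧ ∃ s, h e τ s = true
  · obtain ⟨τ, hστ, hτ⟩ := hσ
    exact ⟨τ, hστ, Or.inl hτ⟩
  · push Not at hσ
    exact ⟨σ, List.prefix_refl σ, Or.inr fun τ hστ s => by simpa using hσ τ hστ s⟩

lemma setOf_oneGeneric_mem_residual (h : ℕ → List Bool → ℕ → Bool) :
    {X | OneGeneric h X} ∈ residual Cantor :=
  mem_of_superset
    (countable_iInter_mem.2 fun e => residual_of_dense_open (isOpen_effOpen (Decides h e))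
      (dense_effOpen (exists_extension_decides h e)))
    fun _ hX e => Set.mem_iInter.1 hX e

section Enumerability

variable {α β : Type} [Primcodable α] [Primcodable β]

lemma CEPred.comp {P : β → Prop} (hP : CEPred P) {g : α → β} (hg : Computable g) :
    CEPred fun a => P (g a) := by
  obtain ⟨f, hf, hfP⟩ := hP
  exact ⟨fun a => f (g a), hf.comp hg, fun a => hfP (g a)⟩

lemma CEPred.and {P Q : α → Prop} (hP : CEPred P) (hQ : CEPred Q) :
    CEPred fun a => P a ∧ Q a := by
  obtain ⟨f, hf, hfP⟩ := hP
  obtain ⟨g, hg, hgQ⟩ := hQ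
  refine ⟨fun a => (f a).bind fun _ => g a, hf.bind (hg.comp .fst), fun a => ?_⟩
  beta_reduce
  rw [hfP, hgQ, Part.bind_dom, exists_prop]

lemma ComputablePred.cePred {P : α → Prop} (hP : ComputablePred P) : CEPred P :=
  ⟨fun a => Part.assert (P a) fun _ => Part.some (), hP.to_re,
    fun _ => ⟨fun h => ⟨h, trivial⟩, fun ⟨h, _⟩ => h⟩⟩

lemma Nat.Partrec.Code.eval_dom_iff (c : Nat.Partrec.Code) (n : ℕ) :
    (c.eval n).Dom ↔ ∃ s, (Nat.Partrec.Code.evaln s c n).isSome := by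
  simp only [Part.dom_iff_mem, Nat.Partrec.Code.evaln_complete, Option.isSome_iff_exists]
  exact exists_comm

lemma CEPred.exists_decider {P : α → Prop} (hP : CEPred P) :
    ∃ d : α → ℕ → Bool, Computable₂ d ∧ ∀ a, P a ↔ ∃ s, d a s = true := by
  obtain ⟨f, hf, hfP⟩ := hP
  obtain ⟨c, hc⟩ := Nat.Partrec.Code.exists_code.1 hf
  refine ⟨fun a s => (Nat.Partrec.Code.evaln s c (Encodable.encode a)).isSome, ?_, fun a => ?_⟩
  · exact Primrec₂.to_comp (Primrec.to₂ (Primrec.option_isSome.comp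
      (Nat.Partrec.Code.primrec_evaln.comp
        ((Primrec.snd.pair (Primrec.const c)).pair (Primrec.encode.comp Primrec.fst)))))
  rw [hfP, ← Nat.Partrec.Code.eval_dom_iff, hc]
  simp [Encodable.encodek]

lemma CEPred.exists_partrec_witness {R : α → β → Prop}
    (hR : CEPred fun p : α × β => R p.1 p.2) :
    ∃ f : α →. β, Partrec f ∧ (∀ a, (∃ b, R a b) → (f a).Dom) ∧
      ∀ a, ∀ b ∈ f a, R a b := by
  obtain ⟨d, hd, hdR⟩ := hR.exists_decider
  -- `k` codes a candidate witness `b` together with a stage `s` at which `R a b` is confirmed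
  let g : α → ℕ → Option β := fun a k =>
    (Encodable.decode (α := β × ℕ) k).bind fun q => cond (d (a, q.1) q.2) (some q.1) none
  have hg : Computable₂ g :=
    Computable.option_bind (Computable.decode.comp .snd) <| Computable.cond
      (hd.comp ((Computable.fst.comp .fst).pair (Computable.fst.comp .snd))
        (Computable.snd.comp .snd))
      (Computable.option_some.comp (Computable.fst.comp .snd)) (Computable.const none)
  refine ⟨fun a => Nat.rfindOpt (g a), Partrec.rfindOpt hg, fun a ⟨b, hb⟩ => ?_,
    fun a b hb => ?_⟩
  · obtain ⟨s, hs⟩ := (hdR (a, b)).1 hb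
    exact Nat.rfindOpt_dom.2 ⟨Encodable.encode (b, s), b, by simp [g, hs]⟩
  · obtain ⟨k, hk⟩ := Nat.rfindOpt_spec hb
    obtain ⟨q, -, hq⟩ := Option.bind_eq_some_iff.1 hk
    cases hdq : d (a, q.1) q.2
    · simp [hdq] at hq
    · obtain rfl : q.1 = b := by simpa [hdq] using hq
      exact (hdR (a, q.1)).2 ⟨q.2, hdq⟩

lemma List.prefix_iff_map_range_getElem? {δ : Type*} {l₁ l₂ : List δ} :
    l₁ <+: l₂ ↔ (List.range l₁.length).map (l₂[·]?) = l₁.map some := by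
  rw [List.prefix_iff_getElem?, List.ext_getElem_iff]
  simp

lemma computablePred_prefix {δ : Type} [Primcodable δ] [DecidableEq δ] :
    ComputablePred fun p : List δ × List δ => p.1 <+: p.2 := by
  refine ⟨inferInstance, Primrec.to_comp ?_⟩
  refine (Primrec.eq.comp
    (Primrec.list_map (Primrec.list_range.comp (Primrec.list_length.comp .fst))
      (Primrec.list_getElem?.comp (Primrec.snd.comp .fst) .snd).to₂)
    (Primrec.list_map .fst (Primrec.option_some.comp .snd).to₂)).decide.of_eq fun p => ?_
  simp only [List.prefix_iff_map_range_getElem?]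

end Enumerability

section Chains

def chainLimit (c : ℕ → List Bool) : Cantor := fun i => (c (i + 1)).getD i false

variable {c : ℕ → List Bool}

lemma prefix_of_le_of_prefix_succ (hc : ∀ m, c m <+: c (m + 1)) {m n : ℕ} (hmn : m ≤ n) :
    c m <+: c n := by
  induction hmn with
  | refl => exact List.prefix_refl _
  | step _ ih => exact ih.trans (hc _)

lemma chainLimit_mem_cyl (hc : ∀ m, c m <+: c (m + 1))
    (hlen : ∀ m, (c m).length < (c (m + 1)).length) (m : ℕ) : chainLimit c ∈ cyl (c m) := by
  have hlen' : ∀ m, m ≤ (c m).length := fun m => by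
    induction m with
    | zero => exact Nat.zero_le _
    | succ m ih => exact ih.trans_lt (hlen m)
  refine mem_cyl_iff.2 fun i hi => ?_
  have hi' : i < (c (i + 1)).length := hlen' (i + 1)
  rw [chainLimit, List.getD_eq_getElem _ _ hi']
  rcases le_total (i + 1) m with h | h
  · exact (prefix_of_le_of_prefix_succ hc h).getElem hi'
  · exact ((prefix_of_le_of_prefix_succ hc h).getElem hi).symm

lemma Computable.chainLimit (hc : Computable c) : Computable (chainLimit c) :=
  (Primrec.list_getD false).to_comp.comp (hc.comp .succ) .id

lemma exists_computable_chain {next : ℕ → List Bool →. List Bool} (hnext : Partrec₂ next)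
    {σ : List Bool} (hdom : ∀ m ρ, σ <+: ρ → (next m ρ).Dom)
    (hext : ∀ m ρ, σ <+: ρ → ∀ ρ' ∈ next m ρ, ρ <+: ρ') :
    ∃ c : ℕ → List Bool, Computable c ∧ (∀ m, σ <+: c m) ∧
      ∀ m, ∃ ρ ∈ next m (c m), c (m + 1) = ρ ++ [false] := by
  let P : ℕ →. List Bool := fun m =>
    m.rec (Part.some σ) fun y IH => IH.bind fun ρ => (next y ρ).map (· ++ [false])
  have happend :
      Computable₂ fun (_ : ℕ × ℕ × List Bool) (ρ : List Bool) => ρ ++ [false] :=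
    (Primrec.list_append.comp .snd (Primrec.const _)).to_comp
  have hP : Partrec P := Partrec.nat_rec .id (Partrec.const' _)
    ((hnext.comp (Computable.fst.comp .snd) (Computable.snd.comp .snd)).map happend).to₂
  have hPtot : ∀ m, ∃ ρ ∈ P m, σ <+: ρ := by
    intro m
    induction m with
    | zero => exact ⟨σ, Part.mem_some σ, List.prefix_refl σ⟩
    | succ m ih =>
      obtain ⟨ρ, hρ, hσρ⟩ := ih
      obtain ⟨ρ', hρ'⟩ := Part.dom_iff_mem.1 (hdom m ρ hσρ)
      exact ⟨ρ' ++ [false], Part.mem_bind hρ (Part.mem_map _ hρ'),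
        (hσρ.trans (hext m ρ hσρ ρ' hρ')).trans (List.prefix_append _ _)⟩
  choose c hcP hσc using hPtot
  refine ⟨c, hP.of_eq_tot hcP, hσc, fun m => ?_⟩
  obtain ⟨ρ, hρ, hc⟩ := Part.mem_bind_iff.1 (hcP (m + 1))
  obtain ⟨ρ', hρ', hcm⟩ := (Part.mem_map_iff _).1 hc
  rw [Part.mem_unique hρ (hcP m)] at hρ'
  exact ⟨ρ', hρ', hcm.symm⟩

lemma exists_computable_mem_cyl_of_partrec_step {next : ℕ → List Bool →. List Bool}
    (hnext : Partrec₂ next) {σ : List Bool} (hdom : ∀ m ρ, σ <+: ρ → (next m ρ).Dom)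
    (hext : ∀ m ρ, σ <+: ρ → ∀ ρ' ∈ next m ρ, ρ <+: ρ') :
    ∃ A : Cantor, Computable A ∧
      ∀ m, ∃ ρ, σ <+: ρ ∧ ∃ ρ' ∈ next m ρ, A ∈ cyl ρ' := by
  obtain ⟨c, hc, hσc, hstep⟩ := exists_computable_chain hnext hdom hext
  choose ρ hρ hcρ using hstep
  have hc_succ : ∀ m, ρ m <+: c (m + 1) := fun m => hcρ m ▸ List.prefix_append _ _
  have hc_mono : ∀ m, c m <+: c (m + 1) := fun m =>
    (hext m _ (hσc m) _ (hρ m)).trans (hc_succ m)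
  have hc_len : ∀ m, (c m).length < (c (m + 1)).length := fun m => by
    rw [hcρ m, List.length_append, List.length_singleton]
    exact Nat.lt_succ_of_le (hext m _ (hσc m) _ (hρ m)).length_le
  exact ⟨chainLimit c, hc.chainLimit, fun m => ⟨c m, hσc m, ρ m, hρ m,
    cyl_anti (hc_succ m) (chainLimit_mem_cyl hc_mono hc_len (m + 1))⟩⟩

end Chains

theorem exists_computable_mem_iInter_effOpen {S : ℕ → List Bool → Prop}
    (hS : CEPred fun p : ℕ × List Bool => S p.1 p.2) {σ : List Bool}
    (hσ : ∀ τ, σ <+: τ → ∃ A ∈ ⋂ m, effOpen (S m), A ∈ cyl τ) :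
    ∃ A ∈ ⋂ m, effOpen (S m), Computable A := by
  obtain ⟨f, hf, hfdom, hfR⟩ := CEPred.exists_partrec_witness
    (R := fun (p : ℕ × List Bool) (q : List Bool × List Bool) =>
      p.2 <+: q.1 ∧ q.2 <+: q.1 ∧ S p.1 q.2)
    ((computablePred_prefix.cePred.comp
        ((Computable.snd.comp .fst).pair (Computable.fst.comp .snd))).and
      ((computablePred_prefix.cePred.comp
          ((Computable.snd.comp .snd).pair (Computable.fst.comp .snd))).and
        (hS.comp ((Computable.fst.comp .fst).pair (Computable.snd.comp .snd)))))
  have hdom : ∀ m ρ, σ <+: ρ → (f (m, ρ)).Dom := by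
    intro m ρ hρ
    obtain ⟨A, hA, hAρ⟩ := hσ ρ hρ
    obtain ⟨j, hj⟩ := Set.mem_iInter.1 hA m
    refine hfdom _
      ⟨(pref A (max j ρ.length), pref A j), ?_, pref_prefix_pref A (le_max_left _ _), hj⟩
    simpa [show pref A ρ.length = ρ from hAρ] using pref_prefix_pref A (le_max_right j ρ.length)
  obtain ⟨A, hA, hAm⟩ := exists_computable_mem_cyl_of_partrec_step (σ := σ)
    (next := fun m ρ => (f (m, ρ)).map Prod.fst)
    ((hf.comp (Computable.fst.pair Computable.snd)).map (Computable.fst.comp .snd).to₂).to₂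
    hdom fun m ρ _ τ hτ => by
      obtain ⟨q, hq, rfl⟩ := (Part.mem_map_iff _).1 hτ
      exact (hfR _ q hq).1
  refine ⟨A, Set.mem_iInter.2 fun m => ?_, hA⟩
  obtain ⟨ρ, -, τ, hτ, hAτ⟩ := hAm m
  obtain ⟨q, hq, rfl⟩ := (Part.mem_map_iff _).1 hτ
  obtain ⟨-, hπ, hS⟩ := hfR _ q hq
  exact mem_effOpen_of_mem_cyl hS (cyl_anti hπ hAτ)

theorem comeager_sigma03_computable_member_and_generics_not_Sigma03_general
    (h : ℕ → List Bool → ℕ → Bool)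
    (hnoncomp : ∀ X : Cantor, OneGeneric h X → ¬ Computable X) :
    (∀ S : ℕ → ℕ → List Bool → Prop,
        CEPred (fun p : ℕ × ℕ × List Bool => S p.1 p.2.1 p.2.2) →
        ∀ X : Set Cantor, X = ⋃ n, ⋂ m, effOpen (S n m) →
        X ∈ residual Cantor →
        (∀ n, ∃ σ : List Bool, ∀ τ : List Bool, σ <+: τ →
            ∃ A ∈ ⋂ m, effOpen (S n m), pref A τ.length = τ) →
        ∃ A ∈ X, Computable A) ∧
    ¬ IsSigma03Class {X : Cantor | OneGeneric h X} := by
  refine ⟨fun S hS X hX _ hdense => ?_, fun ⟨S, hS, hgen⟩ => ?_⟩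
  · obtain ⟨σ, hσ⟩ := hdense 0
    obtain ⟨A, hA, hAc⟩ := exists_computable_mem_iInter_effOpen
      (hS.comp ((Computable.const 0).pair .id)) hσ
    exact ⟨A, hX ▸ Set.mem_iUnion_of_mem 0 hA, hAc⟩
  by_cases hdense : ∃ n σ, ∀ τ, σ <+: τ → ∃ A ∈ ⋂ m, effOpen (S n m), A ∈ cyl τ
  · obtain ⟨n, σ, hσ⟩ := hdense
    obtain ⟨A, hA, hAc⟩ := exists_computable_mem_iInter_effOpen
      (hS.comp ((Computable.const n).pair .id)) hσ
    exact hnoncomp A (hgen.symm.subset (Set.mem_iUnion_of_mem n hA)) hAc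
  push Not at hdense
  refine not_isMeagre_of_mem_residual (setOf_oneGeneric_mem_residual h) ?_
  rw [hgen]
  exact isMeagre_iUnion fun n => (isNowhereDense_of_forall_exists_cyl (hdense n)).isMeagre

/-- Every comeager subset of Cantor space which is a countable union of
countable intersections of uniformly c.e. open sets, each intersection being
dense in some basic open interval, contains a computable sequence.
Consequently, the class of 1-generic sequences is not Σ⁰₃. -/
theorem comeager_sigma03_computable_member_and_generics_not_Sigma03
    (h : ℕ → List Bool → ℕ → Bool)
    (hcomp : Computable fun p : ℕ × List Bool × ℕ => h p.1 p.2.1 p.2.2)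
    (hmono : ∀ e σ τ s t, σ <+: τ → s ≤ t → h e σ s = true → h e τ t = true)
    (hnoncomp : ∀ X : Cantor, OneGeneric h X → ¬ Computable X) :
    (∀ S : ℕ → ℕ → List Bool → Prop,
        CEPred (fun p : ℕ × ℕ × List Bool => S p.1 p.2.1 p.2.2) →
        ∀ X : Set Cantor, X = ⋃ n, ⋂ m, effOpen (S n m) →
        X ∈ residual Cantor →
        (∀ n, ∃ σ : List Bool, ∀ τ : List Bool, σ <+: τ →
            ∃ A ∈ ⋂ m, effOpen (S n m), pref A τ.length = τ) →
        ∃ A ∈ X, Computable A) ∧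
    ¬ IsSigma03Class {X : Cantor | OneGeneric h X} :=
  comeager_sigma03_computable_member_and_generics_not_Sigma03_general h hnoncomp
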